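/- The LCU circuit exactly block-encodes the Difference-of-Gaussian operator with subnormalization 2: for all vectors v and w in the data space, ⟪e₀ ⊗ e₀ ⊗ w, U (e₀ ⊗ e₀ ⊗ v)⟫ = (1/2) · ⟪w, A v⟫, where U = (P† on indicator⊗shift, identity on data) ∘ SEL ∘ (Z on indicator, identity elsewhere) ∘ (P on indicator⊗shift, identity on data). -/

import Mathlib

open scoped BigOperators Kronecker

noncomputable section

/-- The periodic grid `ℤ_N^D`. -/
abbrev Grid (N D : ℕ) := Fin D → ZMod N

/-- The matrix of the cyclic shift operator `S_t`, `(S_t v)(j) = v (j - t)`. -/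
def shiftMat (N D : ℕ) (t : Grid N D) : Matrix (Grid N D) (Grid N D) ℂ :=
  Matrix.of fun j j' => if j' = j - t then 1 else 0

/-- The Hadamard unitary on the indicator qubit. -/
def Hmat : Matrix (Fin 2) (Fin 2) ℂ :=
  ((1 / Real.sqrt 2 : ℝ) : ℂ) • !![1, 1; 1, -1]

/-- The Pauli-Z unitary on the indicator qubit. -/
def Zmat : Matrix (Fin 2) (Fin 2) ℂ := !![1, 0; 0, -1]

/-- The rank-one projector `|e_a⟩⟨e_a|` on the indicator qubit. -/
def proj (a : Fin 2) : Matrix (Fin 2) (Fin 2) ℂ := Matrix.single a a 1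

variable {T : Type*} [Fintype T] [DecidableEq T]

/-- The preparation unitary `P = (|e₀⟩⟨e₀| ⊗ G_p + |e₁⟩⟨e₁| ⊗ G_q) ∘ (H ⊗ I)` on the
indicator⊗shift factors. -/
def Pmat (Gp Gq : Matrix T T ℂ) : Matrix (Fin 2 × T) (Fin 2 × T) ℂ :=
  (proj 0 ⊗ₖ Gp + proj 1 ⊗ₖ Gq) * (Hmat ⊗ₖ (1 : Matrix T T ℂ))

/-- Extension of an operator on the indicator⊗shift factors to the total space, by tensoring
with the identity on the data factor. -/
def extendData (N D : ℕ) (M : Matrix (Fin 2 × T) (Fin 2 × T) ℂ) :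
    Matrix (Fin 2 × T × Grid N D) (Fin 2 × T × Grid N D) ℂ :=
  Matrix.of fun x y => M (x.1, x.2.1) (y.1, y.2.1) * (if x.2.2 = y.2.2 then 1 else 0)

/-- The select unitary `SEL = ∑_t I ⊗ |e_t⟩⟨e_t| ⊗ S_{τ t}`. -/
def selMat (N D : ℕ) (τ : T → Grid N D) :
    Matrix (Fin 2 × T × Grid N D) (Fin 2 × T × Grid N D) ℂ :=
  ∑ t : T, (1 : Matrix (Fin 2) (Fin 2) ℂ) ⊗ₖ (Matrix.single t t 1 ⊗ₖ shiftMat N D (τ t))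

/-- The full block-encoding unitary
`U = (P† ⊗ I) * SEL * (Z ⊗ I ⊗ I) * (P ⊗ I)`. -/
def Umat (N D : ℕ) [NeZero N] (τ : T → Grid N D) (Gp Gq : Matrix T T ℂ) :
    Matrix (Fin 2 × T × Grid N D) (Fin 2 × T × Grid N D) ℂ :=
  extendData N D (Pmat Gp Gq).conjTranspose * selMat N D τ *
    extendData N D (Zmat ⊗ₖ (1 : Matrix T T ℂ)) * extendData N D (Pmat Gp Gq)

/-- The embedding `v ↦ e₀ ⊗ e₀ ⊗ v` of the data space into the total space. -/
def embed (N D : ℕ) (t0 : T) (v : EuclideanSpace ℂ (Grid N D)) :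
    EuclideanSpace ℂ (Fin 2 × T × Grid N D) :=
  WithLp.toLp 2 (fun x => if x.1 = 0 ∧ x.2.1 = t0 then v x.2.2 else 0 : Fin 2 × T × Grid N D → ℂ)

/-- The matrix of the DoG operator `A = ∑_t (p t - q t) • S_{τ t}`. -/
def dogMat (N D : ℕ) (τ : T → Grid N D) (p q : T → ℝ) :
    Matrix (Grid N D) (Grid N D) ℂ :=
  ∑ t : T, ((p t - q t : ℝ) : ℂ) • shiftMat N D (τ t)


open Matrix in
lemma sel_apply' (N D : ℕ) (τ : T → Grid N D) (a b : Fin 2) (t s : T) (j k : Grid N D) :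
    selMat N D τ (a, t, j) (b, s, k) =
      (if a = b then 1 else 0) * ((if s = t then (1:ℂ) else 0) * shiftMat N D (τ t) j k) := by
  simp [selMat, Matrix.sum_apply, Matrix.single, Matrix.one_apply, and_comm]
  by_cases h : s = t
  · simp [h]
  · simp only [h, if_false]
    refine Finset.sum_eq_zero fun u _ => ?_
    by_cases hu : u = t <;> simp [hu, Ne.symm h]

open Matrix in
lemma P_entry (t0 : T) (Gp Gq : Matrix T T ℂ) (a : Fin 2) (t : T) :
    Pmat Gp Gq (a, t) (0, t0) =
      ((1 / Real.sqrt 2 : ℝ) : ℂ) * (if a = 0 then Gp t t0 else Gq t t0) := by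
  simp [Pmat, Matrix.mul_apply, Fintype.sum_prod_type, Matrix.one_apply, proj,
    Matrix.single, Hmat, Fin.sum_univ_two]
  fin_cases a <;> simp [Matrix.one_apply] <;> ring

open Matrix in
lemma key_entry (N D : ℕ) [NeZero N] (t0 : T) (τ : T → Grid N D) (p q : T → ℝ)
    (hp : ∀ t, 0 ≤ p t) (hq : ∀ t, 0 ≤ q t)
    (Gp Gq : Matrix T T ℂ)
    (hGp : ∀ t, Gp t t0 = (Real.sqrt (p t) : ℂ))
    (hGq : ∀ t, Gq t t0 = (Real.sqrt (q t) : ℂ))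
    (j j' : Grid N D) :
    Umat N D τ Gp Gq (0, t0, j) (0, t0, j') = (1 / 2 : ℂ) * dogMat N D τ p q j j' := by
  unfold Umat
  simp only [Matrix.mul_apply, Fintype.sum_prod_type, extendData, Matrix.of_apply,
    Matrix.conjTranspose_apply, sel_apply', Matrix.kroneckerMap_apply, Matrix.one_apply,
    mul_ite, ite_mul, mul_zero, zero_mul, mul_one, one_mul,
    Finset.sum_ite_irrel, Finset.sum_ite_eq, Finset.sum_ite_eq', Finset.mem_univ, if_true,
    Finset.sum_const_zero, add_zero, zero_add, map_zero, Fin.sum_univ_two]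
  simp only [one_ne_zero, if_false, add_zero, zero_add, Zmat, Matrix.cons_val', Matrix.cons_val_zero,
    Matrix.cons_val_one, Matrix.head_cons, Matrix.head_fin_const, Matrix.empty_val',
    Matrix.cons_val_fin_one, Matrix.of_apply, mul_one, mul_neg, neg_mul, mul_zero, zero_mul,
    P_entry t0 Gp Gq, hGp, hGq, if_true, dogMat, Matrix.sum_apply, Matrix.smul_apply, smul_eq_mul]
  simp only [zero_ne_one, if_false, zero_add, Complex.star_def, _root_.map_mul,
    Complex.conj_ofReal]
  rw [← Finset.sum_add_distrib, Finset.mul_sum]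
  refine Finset.sum_congr rfl fun t _ => ?_
  have hs2 : ((Real.sqrt 2 : ℝ) : ℂ) * ((Real.sqrt 2 : ℝ) : ℂ) = 2 := by
    rw [← Complex.ofReal_mul, Real.mul_self_sqrt (by norm_num)]; norm_num
  have hc : ((Real.sqrt 2 : ℝ) : ℂ)⁻¹ * ((Real.sqrt 2 : ℝ) : ℂ)⁻¹ = 1 / 2 := by
    rw [← mul_inv, hs2]; norm_num
  have h1 : ((Real.sqrt (p t) : ℝ) : ℂ) * ((Real.sqrt (p t) : ℝ) : ℂ) = ((p t : ℝ) : ℂ) := by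
    rw [← Complex.ofReal_mul, Real.mul_self_sqrt (hp t)]
  have h2 : ((Real.sqrt (q t) : ℝ) : ℂ) * ((Real.sqrt (q t) : ℝ) : ℂ) = ((q t : ℝ) : ℂ) := by
    rw [← Complex.ofReal_mul, Real.mul_self_sqrt (hq t)]
  push_cast [one_div]
  linear_combination shiftMat N D (τ t) j j' *
    (((Real.sqrt (p t) : ℝ) : ℂ) * ((Real.sqrt (p t) : ℝ) : ℂ) * hc + (1 / 2 : ℂ) * h1 -
      ((Real.sqrt (q t) : ℝ) : ℂ) * ((Real.sqrt (q t) : ℝ) : ℂ) * hc - (1 / 2 : ℂ) * h2)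

open Matrix in
/-- the LCU circuit exactly block-encodes the DoG operator with
subnormalization `2`: `⟪e₀⊗e₀⊗w, U (e₀⊗e₀⊗v)⟫ = (1/2) ⟪w, A v⟫`. -/
theorem lcu_block_encoding (N D : ℕ) [NeZero N] (hD : 1 ≤ D)
    (t0 : T) (τ : T → Grid N D) (p q : T → ℝ)
    (hp : ∀ t, 0 ≤ p t) (hq : ∀ t, 0 ≤ q t)
    (hpsum : ∑ t : T, p t = 1) (hqsum : ∑ t : T, q t = 1)
    (Gp Gq : Matrix T T ℂ)
    (hGpU : Gp ∈ Matrix.unitaryGroup T ℂ) (hGqU : Gq ∈ Matrix.unitaryGroup T ℂ)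
    (hGp : ∀ t, Gp t t0 = (Real.sqrt (p t) : ℂ))
    (hGq : ∀ t, Gq t t0 = (Real.sqrt (q t) : ℂ))
    (v w : EuclideanSpace ℂ (Grid N D)) :
    @inner ℂ _ _ (embed N D t0 w)
        (Matrix.toEuclideanLin (Umat N D τ Gp Gq) (embed N D t0 v)) =
      (1 / 2 : ℂ) * @inner ℂ _ _ w (Matrix.toEuclideanLin (dogMat N D τ p q) v) := by
  have hU := key_entry N D t0 τ p q hp hq Gp Gq hGp hGq
  have hemb : ∀ (u : EuclideanSpace ℂ (Grid N D)) (x : Fin 2 × T × Grid N D),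
      embed N D t0 u x = (if x.1 = 0 then (1:ℂ) else 0) *
        ((if x.2.1 = t0 then (1:ℂ) else 0) * u x.2.2) := by
    intro u x
    by_cases h1 : x.1 = 0 <;> by_cases h2 : x.2.1 = t0 <;> simp [embed, h1, h2]
  have happ : ∀ (M : Matrix (Fin 2 × T × Grid N D) (Fin 2 × T × Grid N D) ℂ)
      (u : EuclideanSpace ℂ (Fin 2 × T × Grid N D)) (x),
      (Matrix.toEuclideanLin M u) x = ∑ y, M x y * u y := by
    intro M u x; rfl
  have happ2 : ∀ (M : Matrix (Grid N D) (Grid N D) ℂ)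
      (u : EuclideanSpace ℂ (Grid N D)) (x),
      (Matrix.toEuclideanLin M u) x = ∑ y, M x y * u y := by
    intro M u x; rfl
  simp only [PiLp.inner_apply, RCLike.inner_apply, happ, happ2, hemb, hU,
    Fintype.sum_prod_type, _root_.map_mul, mul_ite, ite_mul, one_mul, mul_one, zero_mul,
    mul_zero, _root_.map_one, map_zero, one_ne_zero, Finset.sum_ite_irrel, Finset.sum_ite_eq, Finset.sum_ite_eq',
    Finset.mem_univ, if_true, Fin.sum_univ_two, Fin.isValue]
  simp only [if_false, Finset.sum_const_zero, add_zero, zero_add, mul_ite, ite_mul,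
    mul_zero, zero_mul, map_zero, Finset.sum_ite_eq', Finset.mem_univ, if_true]
  simp only [ite_self, map_zero, zero_mul, Finset.sum_const_zero, add_zero,
    apply_ite (starRingEnd ℂ), ite_mul, Finset.sum_ite_irrel, Finset.sum_ite_eq', Finset.mem_univ, if_true, hU]
  simp only [mul_ite, mul_zero, Finset.sum_const_zero, add_zero, Finset.sum_ite_irrel,
    Finset.sum_ite_eq', Finset.mem_univ, if_true, hU, Finset.sum_mul]
  simp only [Finset.mul_sum]
  exact Finset.sum_congr rfl fun x _ => Finset.sum_congr rfl fun y _ => by ring
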